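/- Let A be a unital C*-algebra and H a selfadjoint element of A whose real spectrum is contained in {x : |x| ≥ δ} for some δ > 0. Then the map λ ↦ H(H² + λ²·1)⁻¹ is Bochner integrable on (0,∞) and (2/π) ∫₀^∞ H (H² + λ²·1)⁻¹ dλ = sgn(H), where sgn(H) denotes the continuous functional calculus of H applied to x ↦ x/|x|. -/

import Mathlib

/-!
For real `x ≠ 0` the substitution `λ = |x| t` gives `∫₀^∞ x / (x² + λ²) dλ = (π/2) · x/|x|`.
Applying the continuous functional calculus at `H` to the family `x ↦ x / (x² + λ²)`, whose value
is `H (H² + λ²)⁻¹`, turns this into the operator identity; interchanging `cfc` and the integral is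
justified by the majorant `R / (δ² + λ²)`, integrable because the spectrum stays at distance `δ` from `0` and is
bounded by some `R`.
-/

open MeasureTheory Set

lemma inv_sq_add_sq_eq {c : ℝ} (hc : c ≠ 0) (l : ℝ) :
    (c ^ 2 + l ^ 2)⁻¹ = (c ^ 2)⁻¹ * (1 + (c⁻¹ * l) ^ 2)⁻¹ := by
  field_simp

lemma integrable_inv_sq_add_sq {c : ℝ} (hc : c ≠ 0) :
    Integrable fun l : ℝ => (c ^ 2 + l ^ 2)⁻¹ := by
  simpa only [inv_sq_add_sq_eq hc] using
    (integrable_inv_one_add_sq.comp_mul_left' (inv_ne_zero hc)).const_mul (c ^ 2)⁻¹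

lemma integral_Ioi_inv_sq_add_sq {c : ℝ} (hc : 0 < c) :
    ∫ l in Ioi 0, (c ^ 2 + l ^ 2)⁻¹ = Real.pi / (2 * c) := by
  simp_rw [inv_sq_add_sq_eq hc.ne']
  rw [integral_const_mul, integral_comp_mul_left_Ioi (fun t => (1 + t ^ 2)⁻¹) 0 (inv_pos.2 hc),
    mul_zero, integral_Ioi_inv_one_add_sq, Real.arctan_zero, sub_zero, inv_inv, smul_eq_mul]
  field_simp

lemma integral_Ioi_div_sq_add_sq {x : ℝ} (hx : x ≠ 0) :
    ∫ l in Ioi 0, x / (x ^ 2 + l ^ 2) = Real.pi / 2 * (x / |x|) := by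
  simp_rw [div_eq_mul_inv x, ← sq_abs x]
  rw [integral_const_mul, integral_Ioi_inv_sq_add_sq (abs_pos.2 hx)]
  field_simp

lemma abs_div_sq_add_sq_le {δ R x : ℝ} (hδ : 0 < δ) (hδx : δ ≤ |x|) (hxR : |x| ≤ R) (l : ℝ) :
    |x / (x ^ 2 + l ^ 2)| ≤ R * (δ ^ 2 + l ^ 2)⁻¹ := by
  have hsq : δ ^ 2 ≤ x ^ 2 := by rw [← sq_abs x]; gcongr
  rw [abs_div, abs_of_nonneg (by positivity : 0 ≤ x ^ 2 + l ^ 2), div_eq_mul_inv]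
  gcongr
  exact (abs_nonneg x).trans hxR

lemma continuousOn_uncurry_div_sq_add_sq :
    ContinuousOn (Function.uncurry fun l x : ℝ => x / (x ^ 2 + l ^ 2)) (Ioi 0 ×ˢ univ) := by
  refine continuousOn_snd.div (by fun_prop) fun q hq => ?_
  have : 0 < q.1 := hq.1
  positivity

lemma mul_ringInverse_sq_add_smul_one_eq_cfc {A : Type*} {p : A → Prop} [Ring A] [StarRing A]
    [Algebra ℝ A] [TopologicalSpace A] [ContinuousFunctionalCalculus ℝ A p]
    (a : A) {l : ℝ} (hl : l ≠ 0) (ha : p a := by cfc_tac) :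
    a * Ring.inverse (a ^ 2 + l ^ 2 • (1 : A)) = cfc (fun x : ℝ => x / (x ^ 2 + l ^ 2)) a := by
  have hsq : cfc (fun x : ℝ => x ^ 2 + l ^ 2) a = a ^ 2 + l ^ 2 • (1 : A) := by
    rw [cfc_add_const (l ^ 2) (· ^ 2) a, cfc_pow_id a 2, Algebra.algebraMap_eq_smul_one]
  rw [cfc_map_div _ _ a (fun x _ => by positivity), cfc_id' ℝ a, hsq]

lemma integrableOn_and_setIntegral_cfc_div_sq_add_sq {A : Type*} {p : A → Prop} [NormedRing A]
    [StarRing A] [NormedAlgebra ℝ A] [CompleteSpace A] [ContinuousFunctionalCalculus ℝ A p]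
    {δ : ℝ} (hδ : 0 < δ) {a : A} (hspec : spectrum ℝ a ⊆ {x : ℝ | δ ≤ |x|})
    (ha : p a := by cfc_tac) :
    IntegrableOn (fun l : ℝ => cfc (fun x : ℝ => x / (x ^ 2 + l ^ 2)) a) (Ioi 0) ∧
      ∫ l in Ioi 0, cfc (fun x : ℝ => x / (x ^ 2 + l ^ 2)) a =
        cfc (fun x : ℝ => Real.pi / 2 * (x / |x|)) a := by
  have hcont := continuousOn_uncurry_div_sq_add_sq.mono
    (prod_mono_right (subset_univ (spectrum ℝ a)))
  obtain ⟨R, hR⟩ := isBounded_iff_forall_norm_le.1 (spectrum.isCompact (𝕜 := ℝ) a).isBounded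
  have hbound : ∀ᵐ l ∂(volume.restrict (Ioi (0 : ℝ))), ∀ x ∈ spectrum ℝ a,
      ‖x / (x ^ 2 + l ^ 2)‖ ≤ R * (δ ^ 2 + l ^ 2)⁻¹ :=
    .of_forall fun l x hx => abs_div_sq_add_sq_le hδ (hspec hx) (hR x hx) l
  have hbound_int : HasFiniteIntegral (fun l : ℝ => R * (δ ^ 2 + l ^ 2)⁻¹)
      (volume.restrict (Ioi 0)) :=
    ((integrable_inv_sq_add_sq hδ.ne').const_mul R).integrableOn.hasFiniteIntegral
  refine ⟨integrableOn_cfc measurableSet_Ioi _ _ a hcont hbound hbound_int, ?_⟩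
  rw [← cfc_setIntegral measurableSet_Ioi _ _ a hcont hbound hbound_int]
  exact cfc_congr fun x hx => integral_Ioi_div_sq_add_sq (abs_pos.1 (hδ.trans_le (hspec hx)))

/-- Let `A` be a unital C*-algebra and `H` a selfadjoint element whose real spectrum is
contained in `{x : |x| ≥ δ}` for some `δ > 0`. Then the map `λ ↦ H(H² + λ²·1)⁻¹` is
Bochner integrable on `(0,∞)` and `(2/π) ∫₀^∞ H (H² + λ²·1)⁻¹ dλ = sgn(H)`, where
`sgn(H)` is the continuous functional calculus of `H` applied to `x ↦ x/|x|`. -/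
theorem sign_eq_two_div_pi_integral_resolvent {A : Type*} [CStarAlgebra A]
    (δ : ℝ) (hδ : 0 < δ) (H : A) (hH : IsSelfAdjoint H)
    (hspec : spectrum ℝ H ⊆ {x : ℝ | δ ≤ |x|}) :
    IntegrableOn (fun l : ℝ => H * Ring.inverse (H ^ 2 + l ^ 2 • (1 : A))) (Ioi 0) volume ∧
    (2 / Real.pi) • ∫ l in Ioi (0 : ℝ), H * Ring.inverse (H ^ 2 + l ^ 2 • (1 : A)) =
      cfc (fun x : ℝ => x / |x|) H := by
  have hres : EqOn (fun l : ℝ => H * Ring.inverse (H ^ 2 + l ^ 2 • (1 : A)))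
      (fun l => cfc (fun x : ℝ => x / (x ^ 2 + l ^ 2)) H) (Ioi 0) :=
    fun l hl => mul_ringInverse_sq_add_smul_one_eq_cfc H (ne_of_gt hl)
  obtain ⟨hint, hintegral⟩ := integrableOn_and_setIntegral_cfc_div_sq_add_sq hδ hspec hH
  refine ⟨hint.congr_fun hres.symm measurableSet_Ioi, ?_⟩
  have hsgn : ContinuousOn (fun x : ℝ => x / |x|) (spectrum ℝ H) :=
    continuousOn_id.div continuousOn_id.abs fun x hx =>
      abs_ne_zero.2 (abs_pos.1 (hδ.trans_le (hspec hx)))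
  rw [setIntegral_congr_fun measurableSet_Ioi hres, hintegral, cfc_const_mul _ _ H hsgn, smul_smul,
    div_mul_div_cancel₀ Real.pi_ne_zero, div_self two_ne_zero, one_smul]
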